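/- Let A be a skew-symmetric n×n block matrix A = [[A₁₁, A₁₂],[-A₁₂ᵗ, A₂₂]] with A₁₁, A₂₂ square, and let B = [[-A₁₁, A₁₂],[-A₁₂ᵗ, A₂₂]]. If rank(A₁₂) ≤ 1, then A and B have equal corresponding principal minors of all orders. -/

import Mathlib

open Matrix

def MInv {m : Type*} [DecidableEq m] (X : Finset m) (A : Matrix m m ℝ) : Matrix m m ℝ :=
  fun i j => if i ∈ X ∧ j ∈ X then -A i j else A i j

def oSub {m : Type*} (A : Matrix m m ℝ) (X Y : Finset m) : Matrix X Y ℝ :=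
  A.submatrix (fun i => (i : m)) (fun j => (j : m))

def pSub {m : Type*} (A : Matrix m m ℝ) (X : Finset m) : Matrix X X ℝ :=
  A.submatrix (fun i => (i : m)) (fun j => (j : m))

def IsHLClan {m : Type*} [Fintype m] [DecidableEq m] (A : Matrix m m ℝ) (X : Finset m) : Prop :=
  (oSub A X Xᶜ).rank ≤ 1 ∧ (oSub A Xᶜ X).rank ≤ 1

def HLCRE {m : Type*} [Fintype m] [DecidableEq m] (A B : Matrix m m ℝ) : Prop :=
  ∃ N : ℕ, ∃ f : ℕ → Matrix m m ℝ, f 0 = A ∧ f N = B ∧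
    (∀ k ≤ N, (f k)ᵀ = -(f k)) ∧
    (∀ k < N, ∃ X : Finset m, IsHLClan (f k) X ∧ f (k + 1) = MInv X (f k))

/-!
Write `A₁₂ = u vᵀ`. A principal submatrix of `[[±A, u vᵀ], [-v uᵀ, D]]` has the same shape, with
`A`, `D`, `u`, `v` restricted, so it suffices to compare the two full determinants. When `D` has
even size, both equal `det (±A) * det D`: for invertible `D` this is the Schur complement, because
`vᵀ D⁻¹ v = 0` for the skew matrix `D⁻¹`, and the general case follows by perturbing `D` to
`D + ε J` with `J` skew and invertible, both sides being polynomials in `ε`; finally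
`det (-A) = det Aᵀ = det A`. When both blocks have odd size, `A` has a kernel vector `w`, and
either `(w, 0)` is in the kernel of both matrices or a reflection acting on the first block row
carries one matrix to the other. In the remaining case both matrices are skew-symmetric of odd
size.
-/
namespace Matrix

theorem det_eq_zero_of_transpose_eq_neg {K n : Type*} [Field K] [CharZero K] [Fintype n]
    [DecidableEq n] {A : Matrix n n K} (hA : Aᵀ = -A) (hn : Odd (Fintype.card n)) :
    A.det = 0 := by
  have h := congrArg det hA
  rw [det_transpose, det_neg, hn.neg_one_pow, neg_one_mul] at h
  exact self_eq_neg.mp h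

theorem dotProduct_mulVec_self_eq_zero_of_transpose_eq_neg {K n : Type*} [Field K] [CharZero K]
    [Fintype n] {S : Matrix n n K} (hS : Sᵀ = -S) (x : n → K) : x ⬝ᵥ S *ᵥ x = 0 := by
  have h : x ⬝ᵥ S *ᵥ x = -(x ⬝ᵥ S *ᵥ x) := by
    conv_lhs => rw [dotProduct_mulVec, ← mulVec_transpose, hS, dotProduct_comm, neg_mulVec,
      dotProduct_neg]
  exact self_eq_neg.mp h

theorem fromBlocks_transpose_eq_neg {R m n : Type*} [InvolutiveNeg R] {A : Matrix m m R}
    {D : Matrix n n R} (hA : Aᵀ = -A) (hD : Dᵀ = -D) (B : Matrix m n R) :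
    (fromBlocks A B (-Bᵀ) D)ᵀ = -fromBlocks A B (-Bᵀ) D := by
  rw [fromBlocks_transpose, hA, hD, transpose_neg, transpose_transpose, fromBlocks_neg, neg_neg]

theorem exists_transpose_eq_neg_isUnit_det {R n : Type*} [CommRing R] [Fintype n] [DecidableEq n]
    (hn : Even (Fintype.card n)) : ∃ J : Matrix n n R, Jᵀ = -J ∧ IsUnit J.det := by
  obtain ⟨r, hr⟩ := hn
  let e : n ≃ Fin r ⊕ Fin r := Fintype.equivOfCardEq (by simp [hr])
  let J : Matrix (Fin r ⊕ Fin r) (Fin r ⊕ Fin r) R := fromBlocks 0 1 (-1) 0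
  have hJ : Jᵀ = -J := by simp [J, fromBlocks_transpose, fromBlocks_neg]
  have hJJ : (-J) * J = 1 := by simp [J, fromBlocks_multiply, ← fromBlocks_one, fromBlocks_neg]
  refine ⟨J.submatrix e e, by rw [transpose_submatrix, hJ]; rfl, ?_⟩
  rw [det_submatrix_equiv_self]
  exact isUnit_det_of_left_inverse hJJ

theorem eval_det_X_smul_add {R n : Type*} [CommRing R] [Fintype n] [DecidableEq n]
    (A B : Matrix n n R) (r : R) :
    (det ((Polynomial.X : Polynomial R) • A.map Polynomial.C + B.map Polynomial.C)).eval r =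
      det (r • A + B) := by
  rw [← Polynomial.coe_evalRingHom, RingHom.map_det]
  congr 1
  ext i j
  simp only [RingHom.mapMatrix_apply, map_apply, add_apply, smul_apply, smul_eq_mul,
    Polynomial.coe_evalRingHom, Polynomial.eval_add, Polynomial.eval_mul, Polynomial.eval_X,
    Polynomial.eval_C]

theorem finite_setOf_det_add_smul_eq_zero {K n : Type*} [Field K] [Fintype n] [DecidableEq n]
    (A : Matrix n n K) {J : Matrix n n K} (hJ : IsUnit J.det) :
    {ε : K | (A + ε • J).det = 0}.Finite := by
  have hP : det ((Polynomial.X : Polynomial K) • J.map Polynomial.C + A.map Polynomial.C) ≠ 0 :=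
    fun h ↦ hJ.ne_zero <| by rw [← Polynomial.coeff_det_X_add_C_card J A, h, Polynomial.coeff_zero]
  refine (Polynomial.finite_setOfPred_isRoot hP).subset fun ε hε ↦ ?_
  rwa [Set.mem_ofPred_eq, Polynomial.IsRoot.def, eval_det_X_smul_add, add_comm]

theorem det_fromBlocks_vecMulVec_of_isUnit {K m n : Type*} [Field K] [CharZero K] [Fintype m]
    [Fintype n] [DecidableEq m] [DecidableEq n] (A : Matrix m m K) {D : Matrix n n K}
    (hD : Dᵀ = -D) (hDu : IsUnit D.det) (u w : m → K) (v : n → K) :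
    (fromBlocks A (vecMulVec u v) (vecMulVec v w) D).det = A.det * D.det := by
  let := D.invertibleOfIsUnitDet hDu
  have hDinv : D⁻¹ᵀ = -D⁻¹ := by
    rw [transpose_nonsing_inv, hD]
    exact inv_eq_left_inv (by rw [neg_mul_neg, nonsing_inv_mul _ hDu])
  rw [det_fromBlocks₂₂, invOf_eq_nonsing_inv, vecMulVec_mul, vecMulVec_mul, vecMul_vecMulVec,
    ← dotProduct_mulVec, dotProduct_mulVec_self_eq_zero_of_transpose_eq_neg hDinv, zero_smul,
    vecMulVec_zero, sub_zero, mul_comm]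

theorem det_fromBlocks_vecMulVec_of_even {K m n : Type*} [Field K] [CharZero K] [Fintype m]
    [Fintype n] [DecidableEq m] [DecidableEq n] (A : Matrix m m K) {D : Matrix n n K}
    (hD : Dᵀ = -D) (hn : Even (Fintype.card n)) (u w : m → K) (v : n → K) :
    (fromBlocks A (vecMulVec u v) (vecMulVec v w) D).det = A.det * D.det := by
  obtain ⟨J, hJ, hJu⟩ := exists_transpose_eq_neg_isUnit_det (R := K) hn
  set M := fromBlocks A (vecMulVec u v) (vecMulVec v w) D
  set N : Matrix (m ⊕ n) (m ⊕ n) K := fromBlocks 0 0 0 J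
  set P := det ((Polynomial.X : Polynomial K) • N.map Polynomial.C + M.map Polynomial.C)
  set Q := Polynomial.C A.det *
    det ((Polynomial.X : Polynomial K) • J.map Polynomial.C + D.map Polynomial.C)
  have hPQ : P = Q := by
    refine Polynomial.eq_of_infinite_eval_eq P Q <|
      (finite_setOf_det_add_smul_eq_zero D hJu).infinite_compl.mono fun ε hε ↦ ?_
    have hDε : (D + ε • J)ᵀ = -(D + ε • J) := by
      rw [transpose_add, transpose_smul, hD, hJ, smul_neg, neg_add]
    have hNM : ε • N + M = fromBlocks A (vecMulVec u v) (vecMulVec v w) (D + ε • J) := by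
      simp only [N, M, fromBlocks_smul, fromBlocks_add, smul_zero, zero_add]
      rw [add_comm]
    rw [Set.mem_ofPred_eq, Polynomial.eval_mul, Polynomial.eval_C, eval_det_X_smul_add,
      eval_det_X_smul_add, hNM, add_comm (ε • J)]
    exact det_fromBlocks_vecMulVec_of_isUnit A hDε (isUnit_iff_ne_zero.mpr hε) u w v
  simpa [P, Q, eval_det_X_smul_add] using congrArg (Polynomial.eval 0) hPQ

theorem det_fromBlocks_neg_vecMulVec_of_odd {K m n : Type*} [Field K] [CharZero K] [Fintype m]
    [Fintype n] [DecidableEq m] [DecidableEq n] {A : Matrix m m K} (hA : Aᵀ = -A)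
    (hm : Odd (Fintype.card m)) (D : Matrix n n K) (u : m → K) (v x : n → K) :
    (fromBlocks (-A) (vecMulVec u v) (vecMulVec x u) D).det =
      (fromBlocks A (vecMulVec u v) (vecMulVec x u) D).det := by
  obtain ⟨w, hw0, hAw⟩ := exists_mulVec_eq_zero_iff.mpr (det_eq_zero_of_transpose_eq_neg hA hm)
  have hwA : w ᵥ* A = 0 := by rw [← mulVec_transpose, hA, neg_mulVec, hAw, neg_zero]
  by_cases huw : u ⬝ᵥ w = 0
  · have hker : ∀ A' : Matrix m m K, A' *ᵥ w = 0 →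
        (fromBlocks A' (vecMulVec u v) (vecMulVec x u) D).det = 0 := fun A' hA'w ↦
      exists_mulVec_eq_zero_iff.mp ⟨Sum.elim w 0, fun h ↦ hw0 (funext fun i ↦ congrFun h (.inl i)),
        by simp [fromBlocks_mulVec, hA'w, vecMulVec_mulVec, huw]⟩
    rw [hker (-A) (by rw [neg_mulVec, hAw, neg_zero]), hker A hAw]
  · -- `R` fixes the hyperplane `w⊥ ⊇ range A` and sends `u` to `-u`, so `-R` maps `-A` to `A`,
    -- fixes `u`, and has determinant `(-1) ^ card m * (-1) = 1`.
    set R : Matrix m m K := 1 - vecMulVec ((2 / (u ⬝ᵥ w)) • u) w with hR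
    have hRA : -R * -A = A := by
      rw [neg_mul_neg, sub_mul, one_mul, vecMulVec_mul, hwA, vecMulVec_zero, sub_zero]
    have hRu : -R * vecMulVec u v = vecMulVec u v := by
      rw [Matrix.neg_mul, hR, Matrix.sub_mul, Matrix.one_mul, vecMulVec_mul, vecMul_vecMulVec,
        dotProduct_comm w u]
      ext i j
      simp only [vecMulVec_smul, smul_vecMulVec, neg_apply, sub_apply, vecMulVec_apply, smul_apply,
        smul_eq_mul, neg_sub]
      field_simp
      ring
    have hdetR : (-R).det = 1 := by
      rw [det_neg, hR, sub_eq_add_neg, ← neg_vecMulVec, vecMulVec_eq Unit,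
        det_one_add_replicateCol_mul_replicateRow, hm.neg_one_pow, dotProduct_neg, dotProduct_smul,
        smul_eq_mul, dotProduct_comm w u, div_mul_cancel₀ _ huw]
      norm_num
    have hprod : fromBlocks (-R) 0 0 1 * fromBlocks (-A) (vecMulVec u v) (vecMulVec x u) D =
        fromBlocks A (vecMulVec u v) (vecMulVec x u) D := by
      simp [fromBlocks_multiply, hRA, hRu]
    rw [← hprod, det_mul, det_fromBlocks_zero₂₁, hdetR, det_one, one_mul, one_mul]

theorem det_fromBlocks_neg_vecMulVec {K m n : Type*} [Field K] [CharZero K] [Fintype m]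
    [Fintype n] [DecidableEq m] [DecidableEq n] {A : Matrix m m K} {D : Matrix n n K}
    (hA : Aᵀ = -A) (hD : Dᵀ = -D) (u : m → K) (v : n → K) :
    (fromBlocks (-A) (vecMulVec u v) (-(vecMulVec u v)ᵀ) D).det =
      (fromBlocks A (vecMulVec u v) (-(vecMulVec u v)ᵀ) D).det := by
  rcases Nat.even_or_odd (Fintype.card n) with hn | hn
  · have hdet_neg : (-A).det = A.det := by rw [← hA, det_transpose]
    rw [transpose_vecMulVec, ← vecMulVec_neg, det_fromBlocks_vecMulVec_of_even A hD hn,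
      det_fromBlocks_vecMulVec_of_even (-A) hD hn, hdet_neg]
  rcases Nat.even_or_odd (Fintype.card m) with hm | hm
  · have hodd : Odd (Fintype.card (m ⊕ n)) := by
      rw [Fintype.card_sum]
      exact hm.add_odd hn
    have hA' : (-A)ᵀ = -(-A) := by rw [transpose_neg, hA]
    rw [det_eq_zero_of_transpose_eq_neg (fromBlocks_transpose_eq_neg hA hD _) hodd,
      det_eq_zero_of_transpose_eq_neg (fromBlocks_transpose_eq_neg hA' hD _) hodd]
  · rw [transpose_vecMulVec, ← neg_vecMulVec]
    exact det_fromBlocks_neg_vecMulVec_of_odd hA hm D u v (-v)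

theorem exists_eq_vecMulVec_of_rank_le_one {K m n : Type*} [Field K] [Fintype n] [DecidableEq n]
    {M : Matrix m n K} (h : M.rank ≤ 1) : ∃ (u : m → K) (v : n → K), M = vecMulVec u v := by
  obtain ⟨u, hu⟩ := ((Submodule.finrank_le_one_iff_isPrincipal _).mp h).principal
  have hcol : ∀ j, (fun i ↦ M i j) ∈ Submodule.span K {u} := fun j ↦
    hu ▸ ⟨Pi.single j 1, by ext i; simp [mulVec_single]⟩
  choose v hv using fun j ↦ Submodule.mem_span_singleton.mp (hcol j)
  refine ⟨u, v, ?_⟩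
  ext i j
  rw [vecMulVec_apply, ← congrFun (hv j) i, Pi.smul_apply, smul_eq_mul, mul_comm]

end Matrix

theorem det_pSub_fromBlocks {m n : Type*} [Fintype m] [Fintype n] [DecidableEq m]
    [DecidableEq n] (A : Matrix m m ℝ) (B : Matrix m n ℝ) (C : Matrix n m ℝ) (D : Matrix n n ℝ)
    (Y : Finset (m ⊕ n)) :
    (pSub (fromBlocks A B C D) Y).det =
      (fromBlocks (A.submatrix (Subtype.val : {i // Sum.inl i ∈ Y} → m) Subtype.val)
        (B.submatrix Subtype.val (Subtype.val : {j // Sum.inr j ∈ Y} → n))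
        (C.submatrix Subtype.val Subtype.val) (D.submatrix Subtype.val Subtype.val)).det := by
  rw [← det_submatrix_equiv_self Equiv.subtypeSum.symm]
  congr 1
  ext (i | i) (j | j) <;> rfl

theorem stmt_8 {p q : ℕ} (A11 : Matrix (Fin p) (Fin p) ℝ) (A22 : Matrix (Fin q) (Fin q) ℝ)
    (A12 : Matrix (Fin p) (Fin q) ℝ) (h11 : A11ᵀ = -A11) (h22 : A22ᵀ = -A22)
    (hr : A12.rank ≤ 1) :
    ∀ Y : Finset (Fin p ⊕ Fin q),
      (pSub (Matrix.fromBlocks A11 A12 (-A12ᵀ) A22) Y).det =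
        (pSub (Matrix.fromBlocks (-A11) A12 (-A12ᵀ) A22) Y).det := by
  intro Y
  obtain ⟨u, v, rfl⟩ := exists_eq_vecMulVec_of_rank_le_one hr
  rw [det_pSub_fromBlocks, det_pSub_fromBlocks]
  exact (det_fromBlocks_neg_vecMulVec (by rw [transpose_submatrix, h11]; rfl)
    (by rw [transpose_submatrix, h22]; rfl) _ _).symm
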